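/- For a C⁶ function φ : ℝ² → ℝ, the mixed derivative approximation ∂_{ξη}φ ≈ δ_ξ (∂_η φ) + δ_η (∂_ξ φ) − δ_ξ δ_η φ has truncation error O(h²k²), where δ_ξ and δ_η are the central first difference operators with spacings h and k. -/

import Mathlib

/-!
Put `Ψ = δ_η φ - ∂_η φ`. The error of the compact formula is exactly `δ_ξ Ψ - ∂_ξ Ψ`, the
central-difference error of `Ψ` in `ξ`, hence `O(h² sup |∂_ξ³ Ψ|)`. Since `∂_ξ` commutes with
`δ_η` and with `∂_η`, `∂_ξ³ Ψ` is the central-difference error of `∂_ξ³ φ` in `η`, hence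
`O(k² sup |∂_η³ ∂_ξ³ φ|)`, and this sixth derivative is bounded by `M`.
-/

/-- Directional partial derivative on ℝ². -/
noncomputable def pd2 (v : ℝ × ℝ) (f : ℝ × ℝ → ℝ) : ℝ × ℝ → ℝ :=
  fun p => fderiv ℝ f p v

open Set

lemma abs_le_mul_abs_pow_succ_of_hasDerivAt {e e' : ℝ → ℝ} (he : ∀ s, HasDerivAt e (e' s) s)
    (he₀ : e 0 = 0) {B : ℝ} {n : ℕ} (hB : ∀ s, |e' s| ≤ B * |s| ^ n) (t : ℝ) :
    |e t| ≤ B * |t| ^ (n + 1) := by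
  have hB₀ : 0 ≤ B := by simpa using (abs_nonneg _).trans (hB 1)
  have hbound : ∀ s ∈ uIcc 0 t, ‖e' s‖ ≤ B * |t| ^ n := fun s hs => by
    have : |s| ≤ |t| := by simpa using abs_sub_left_of_mem_uIcc hs
    exact (hB s).trans (by gcongr)
  have := (convex_uIcc 0 t).norm_image_sub_le_of_norm_hasDerivWithin_le
    (fun s _ => (he s).hasDerivWithinAt) hbound left_mem_uIcc right_mem_uIcc
  simpa [he₀, pow_succ, mul_assoc] using this

theorem abs_centralDiff_sub_deriv_le {f f₁ f₂ f₃ : ℝ → ℝ} (h₁ : ∀ t, HasDerivAt f (f₁ t) t)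
    (h₂ : ∀ t, HasDerivAt f₁ (f₂ t) t) (h₃ : ∀ t, HasDerivAt f₂ (f₃ t) t) {B : ℝ}
    (hB : ∀ t, |f₃ t| ≤ B) (x : ℝ) {h : ℝ} (hh : h ≠ 0) :
    |(f (x + h) - f (x - h)) / (2 * h) - f₁ x| ≤ B * h ^ 2 := by
  -- `g s = f (x + s) - f (x - s) - 2 f₁(x) s` vanishes to third order at `0`.
  set g₂ := fun s => f₂ (x + s) - f₂ (x - s)
  set g₁ := fun s => f₁ (x + s) + f₁ (x - s) - 2 * f₁ x
  set g := fun s => f (x + s) - f (x - s) - 2 * f₁ x * s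
  have d₂ : ∀ s, HasDerivAt g₂ (f₃ (x + s) + f₃ (x - s)) s := fun s =>
    (((h₃ _).comp_const_add x s).sub ((h₃ _).comp_const_sub x s)).congr_deriv (by ring)
  have d₁ : ∀ s, HasDerivAt g₁ (g₂ s) s := fun s =>
    ((((h₂ _).comp_const_add x s).add ((h₂ _).comp_const_sub x s)).sub_const
      (2 * f₁ x)).congr_deriv (by ring)
  have d : ∀ s, HasDerivAt g (g₁ s) s := fun s =>
    ((((h₁ _).comp_const_add x s).sub ((h₁ _).comp_const_sub x s)).sub
      ((hasDerivAt_id s).const_mul (2 * f₁ x))).congr_deriv (by simp [g₁])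
  have b₂ : ∀ s, |g₂ s| ≤ 2 * B * |s| ^ 1 :=
    abs_le_mul_abs_pow_succ_of_hasDerivAt (n := 0) d₂ (by simp [g₂])
      fun s => by simpa [two_mul] using (abs_add_le _ _).trans (add_le_add (hB _) (hB _))
  have b₁ := abs_le_mul_abs_pow_succ_of_hasDerivAt d₁ (by simp [g₁]; ring) b₂
  have b := abs_le_mul_abs_pow_succ_of_hasDerivAt d (by simp [g]) b₁ h
  have hg : (f (x + h) - f (x - h)) / (2 * h) - f₁ x = g h / (2 * h) := by
    field_simp
    ring
  rw [hg, abs_div, div_le_iff₀ (by positivity)]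
  calc |g h| ≤ 2 * B * |h| ^ 3 := b
    _ = B * h ^ 2 * |2 * h| := by rw [abs_mul, pow_succ, sq_abs]; norm_num; ring

noncomputable def centralDiffError (v : ℝ × ℝ) (s : ℝ) (f : ℝ × ℝ → ℝ) (p : ℝ × ℝ) : ℝ :=
  (f (p + s • v) - f (p - s • v)) / (2 * s) - pd2 v f p

lemma contDiff_pd2 {n : WithTop ℕ∞} {f : ℝ × ℝ → ℝ} (hf : ContDiff ℝ (n + 1) f) (v : ℝ × ℝ) :
    ContDiff ℝ n (pd2 v f) :=
  (ContinuousLinearMap.apply ℝ ℝ v).contDiff.comp (hf.fderiv_right le_rfl)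

lemma differentiable_pd2 {f : ℝ × ℝ → ℝ} (hf : ContDiff ℝ 2 f) (v : ℝ × ℝ) :
    Differentiable ℝ (pd2 v f) :=
  (contDiff_pd2 hf v).differentiable one_ne_zero

lemma contDiff_centralDiffError {n : WithTop ℕ∞} {f : ℝ × ℝ → ℝ} (hf : ContDiff ℝ (n + 1) f)
    (v : ℝ × ℝ) (s : ℝ) : ContDiff ℝ n (centralDiffError v s f) := by
  have hf' : ContDiff ℝ n f := hf.of_le le_self_add
  unfold centralDiffError
  exact (((hf'.comp (contDiff_id.add contDiff_const)).sub
    (hf'.comp (contDiff_id.sub contDiff_const))).div_const _).sub (contDiff_pd2 hf v)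

lemma hasDerivAt_line {f : ℝ × ℝ → ℝ} (hf : Differentiable ℝ f) (p v : ℝ × ℝ) (t : ℝ) :
    HasDerivAt (fun t : ℝ => f (p + t • v)) (pd2 v f (p + t • v)) t := by
  have hline : HasDerivAt (fun t : ℝ => p + t • v) v t := by
    simpa using ((hasDerivAt_id t).smul_const v).const_add p
  exact (hf _).hasFDerivAt.comp_hasDerivAt t hline

theorem abs_centralDiffError_le {f : ℝ × ℝ → ℝ} (hf : ContDiff ℝ 3 f) {v : ℝ × ℝ} {B : ℝ}
    (hB : ∀ p, |pd2 v (pd2 v (pd2 v f)) p| ≤ B) (p : ℝ × ℝ) {s : ℝ} (hs : s ≠ 0) :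
    |centralDiffError v s f p| ≤ B * s ^ 2 := by
  have hf₁ : ContDiff ℝ 2 (pd2 v f) := contDiff_pd2 hf v
  have := abs_centralDiff_sub_deriv_le (hasDerivAt_line (hf.differentiable (by norm_num)) p v)
    (hasDerivAt_line (differentiable_pd2 (hf.of_le (by norm_num)) v) p v)
    (hasDerivAt_line (differentiable_pd2 hf₁ v) p v) (fun t => hB _) 0 hs
  simpa [centralDiffError, sub_smul, ← sub_eq_add_neg] using this

lemma pd2_pd2_apply {f : ℝ × ℝ → ℝ} (hf : ContDiff ℝ 2 f) (u v p : ℝ × ℝ) :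
    pd2 u (pd2 v f) p = fderiv ℝ (fderiv ℝ f) p u v := by
  have hd : DifferentiableAt ℝ (fderiv ℝ f) p :=
    (hf.fderiv_right (m := 1) (by norm_num)).differentiable one_ne_zero p
  exact congrArg (fun L : ℝ × ℝ →L[ℝ] ℝ => L u)
    ((ContinuousLinearMap.apply ℝ ℝ v).hasFDerivAt.comp p hd.hasFDerivAt).fderiv

lemma pd2_comm {f : ℝ × ℝ → ℝ} (hf : ContDiff ℝ 2 f) (u v : ℝ × ℝ) :
    pd2 u (pd2 v f) = pd2 v (pd2 u f) := by
  funext p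
  rw [pd2_pd2_apply hf u v p, pd2_pd2_apply hf v u p]
  exact hf.contDiffAt.isSymmSndFDerivAt (by simp) u v

lemma pd2_centralDiffError {f : ℝ × ℝ → ℝ} (hf : ContDiff ℝ 2 f) (u v : ℝ × ℝ) (s : ℝ) :
    pd2 u (centralDiffError v s f) = centralDiffError v s (pd2 u f) := by
  have hd : Differentiable ℝ f := hf.differentiable (by norm_num)
  funext p
  have hderiv : HasFDerivAt (centralDiffError v s f)
      ((2 * s)⁻¹ • (fderiv ℝ f (p + s • v) - fderiv ℝ f (p - s • v)) - fderiv ℝ (pd2 v f) p) p :=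
    ((((hasFDerivAt_comp_add_right _).2 (hd _).hasFDerivAt).sub
      ((hasFDerivAt_comp_sub _).2 (hd _).hasFDerivAt)).mul_const _).sub
      (differentiable_pd2 hf v p).hasFDerivAt
  show fderiv ℝ _ p u = _
  rw [hderiv.fderiv, centralDiffError, pd2_comm hf]
  simp [pd2, div_eq_inv_mul]

lemma norm_iteratedFDeriv_pd2_le {n : ℕ} {f : ℝ × ℝ → ℝ} (hf : ContDiff ℝ (n + 1) f)
    (v p : ℝ × ℝ) :
    ‖iteratedFDeriv ℝ n (pd2 v f) p‖ ≤ ‖v‖ * ‖iteratedFDeriv ℝ (n + 1) f p‖ := by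
  rw [← norm_iteratedFDeriv_fderiv]
  exact norm_iteratedFDeriv_clm_apply_const (hf.fderiv_right le_rfl).contDiffAt le_rfl

lemma contDiff_foldr_pd2 (l : List (ℝ × ℝ)) {n : WithTop ℕ∞} {f : ℝ × ℝ → ℝ}
    (hf : ContDiff ℝ (n + l.length) f) : ContDiff ℝ n (l.foldr pd2 f) := by
  induction l generalizing n with
  | nil => simpa using hf
  | cons v l ih =>
    rw [List.length_cons, Nat.cast_succ, add_comm _ (1 : WithTop ℕ∞), ← add_assoc] at hf
    exact contDiff_pd2 (ih hf) v

lemma norm_iteratedFDeriv_foldr_pd2_le (l : List (ℝ × ℝ)) {n : ℕ} {f : ℝ × ℝ → ℝ}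
    (hf : ContDiff ℝ (n + l.length : ℕ) f) (p : ℝ × ℝ) :
    ‖iteratedFDeriv ℝ n (l.foldr pd2 f) p‖ ≤
      (l.map norm).prod * ‖iteratedFDeriv ℝ (n + l.length) f p‖ := by
  induction l generalizing n with
  | nil => simp
  | cons v l ih =>
    have hl : n + (v :: l).length = n + 1 + l.length := by simp; ring
    rw [hl] at hf ⊢
    calc ‖iteratedFDeriv ℝ n ((v :: l).foldr pd2 f) p‖
        ≤ ‖v‖ * ‖iteratedFDeriv ℝ (n + 1) (l.foldr pd2 f) p‖ :=
          norm_iteratedFDeriv_pd2_le (contDiff_foldr_pd2 l (by exact_mod_cast hf)) v p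
      _ ≤ ‖v‖ * ((l.map norm).prod * ‖iteratedFDeriv ℝ (n + 1 + l.length) f p‖) := by
          gcongr
          exact ih hf
      _ = _ := by simp [mul_assoc]

lemma abs_foldr_pd2_le (l : List (ℝ × ℝ)) {f : ℝ × ℝ → ℝ} (hf : ContDiff ℝ l.length f)
    (p : ℝ × ℝ) : |l.foldr pd2 f p| ≤ (l.map norm).prod * ‖iteratedFDeriv ℝ l.length f p‖ := by
  have := norm_iteratedFDeriv_foldr_pd2_le l (n := 0) (by simpa using hf) p
  rwa [zero_add, norm_iteratedFDeriv_zero, Real.norm_eq_abs] at this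

theorem pd2_pd2_sub_compactMixedDiff_eq {φ : ℝ × ℝ → ℝ} (hφ : ContDiff ℝ 2 φ) {h k : ℝ}
    (hh : h ≠ 0) (hk : k ≠ 0) (ξ η : ℝ) :
    pd2 (1, 0) (pd2 (0, 1) φ) (ξ, η) -
        ((pd2 (0, 1) φ (ξ + h, η) - pd2 (0, 1) φ (ξ - h, η)) / (2 * h)
          + (pd2 (1, 0) φ (ξ, η + k) - pd2 (1, 0) φ (ξ, η - k)) / (2 * k)
          - (φ (ξ + h, η + k) - φ (ξ + h, η - k) - φ (ξ - h, η + k) + φ (ξ - h, η - k))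
              / (4 * h * k)) =
      centralDiffError (1, 0) h (centralDiffError (0, 1) k φ) (ξ, η) := by
  rw [centralDiffError, congrFun (pd2_centralDiffError hφ (1, 0) (0, 1) k) (ξ, η)]
  simp only [centralDiffError]
  rw [pd2_comm hφ (0, 1) (1, 0)]
  simp only [Prod.smul_mk, smul_eq_mul, mul_one, mul_zero, Prod.mk_add_mk, add_zero,
    Prod.mk_sub_mk, sub_zero]
  field_simp
  ring

/-- The compact mixed-derivative approximation
∂_{ξη}φ ≈ δ_ξ(∂_ηφ) + δ_η(∂_ξφ) − δ_ξδ_ηφ has truncation error O(h²k²) for C⁶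
functions with bounded derivatives up to order 6. -/
theorem stmt6 (φ : ℝ × ℝ → ℝ) (M : ℝ) (hφ : ContDiff ℝ 6 φ)
    (hM : ∀ n : ℕ, n ≤ 6 → ∀ p : ℝ × ℝ, ‖iteratedFDeriv ℝ n φ p‖ ≤ M) :
    ∃ C : ℝ, ∀ h k : ℝ, 0 < h → 0 < k → ∀ ξ η : ℝ,
      |pd2 (1, 0) (pd2 (0, 1) φ) (ξ, η) -
        ((pd2 (0, 1) φ (ξ + h, η) - pd2 (0, 1) φ (ξ - h, η)) / (2 * h)
          + (pd2 (1, 0) φ (ξ, η + k) - pd2 (1, 0) φ (ξ, η - k)) / (2 * k)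
          - (φ (ξ + h, η + k) - φ (ξ + h, η - k) - φ (ξ - h, η + k) + φ (ξ - h, η - k))
              / (4 * h * k))| ≤ C * h ^ 2 * k ^ 2 := by
  refine ⟨M, fun h k hh hk ξ η => ?_⟩
  have hφ₁ : ContDiff ℝ 5 (pd2 (1, 0) φ) := contDiff_pd2 hφ _
  have hφ₂ : ContDiff ℝ 4 (pd2 (1, 0) (pd2 (1, 0) φ)) := contDiff_pd2 hφ₁ _
  have hφ₃ : ContDiff ℝ 3 (pd2 (1, 0) (pd2 (1, 0) (pd2 (1, 0) φ))) := contDiff_pd2 hφ₂ _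
  have h₆ : ∀ p,
      |pd2 (0, 1) (pd2 (0, 1) (pd2 (0, 1) (pd2 (1, 0) (pd2 (1, 0) (pd2 (1, 0) φ))))) p| ≤ M :=
    fun p => by
      have := abs_foldr_pd2_le [(0, 1), (0, 1), (0, 1), (1, 0), (1, 0), (1, 0)] hφ p
      simp only [List.map, List.foldr_cons, List.foldr_nil, List.prod_cons, List.prod_nil,
        List.length_cons, List.length_nil, Prod.norm_def, norm_zero, norm_one, zero_le_one,
        sup_of_le_left, sup_of_le_right, mul_one, one_mul] at this
      exact this.trans (hM 6 le_rfl p)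
  set Ψ := centralDiffError (0, 1) k φ
  have hΨ₃ : ∀ p, |pd2 (1, 0) (pd2 (1, 0) (pd2 (1, 0) Ψ)) p| ≤ M * k ^ 2 := fun p => by
    rw [pd2_centralDiffError (hφ.of_le (by norm_num)), pd2_centralDiffError (hφ₁.of_le
      (by norm_num)), pd2_centralDiffError (hφ₂.of_le (by norm_num))]
    exact abs_centralDiffError_le hφ₃ h₆ p hk.ne'
  rw [pd2_pd2_sub_compactMixedDiff_eq (hφ.of_le (by norm_num)) hh.ne' hk.ne']
  calc _ ≤ M * k ^ 2 * h ^ 2 :=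
        abs_centralDiffError_le (contDiff_centralDiffError (hφ.of_le (by norm_num)) _ _) hΨ₃ _
          hh.ne'
    _ = M * h ^ 2 * k ^ 2 := by ring
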